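/- arXiv:1612.07806 — 2 statements merged into one kernel-verified Lean document; each statement's English description precedes it below -/
import Mathlib

section
/- Fix N, n, s ≤ N, σ ≤ n, and let z ∈ ℂ^{N·n} be indexed by Fin N × Fin n. Suppose for each i ∈ Fin N a set T_i ⊆ Fin n with |T_i| = σ is chosen such that ∑_{j∈T_i}|z(i,j)|² ≥ ∑_{j∈T}|z(i,j)|² for every T ⊆ Fin n with |T| = σ, and suppose S ⊆ Fin N with |S| = s is chosen such that ∑_{j∈T_i}|z(i,j)|² ≥ ∑_{j∈T_{i'}}|z(i',j)|² for every i ∈ S and every i' ∉ S. Let Ω* = ⋃_{i∈S} {i}×T_i. Then for every (s,σ)-sparse support set Σ ⊆ Fin N × Fin n, ‖z·P_{Ω*}‖ ≥ ‖z·P_Σ‖; that is, Ω* is the support of a best (s,σ)-sparse ℓ2-approximation to z. -/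
/-- Euclidean (ℓ2) norm of a finitely indexed complex vector. -/
noncomputable def eNorm {ι : Type*} [Fintype ι] (x : ι → ℂ) : ℝ :=
  Real.sqrt (∑ i, ‖x i‖ ^ 2)

/-- The projection of a vector onto a support set: entries outside `Ω` are set to zero. -/
def projVec {𝕂 : Type*} [Zero 𝕂] {ι : Type*} [DecidableEq ι] (x : ι → 𝕂) (Ω : Finset ι) :
    ι → 𝕂 :=
  fun i => if i ∈ Ω then x i else 0

/-- A support set `Ω ⊆ Fin N × Fin n` is `(s,σ)`-sparse if at most `s` blocks are occupied
and each block contains at most `σ` indices. -/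
def BlockSparseSupport {N n : ℕ} (s σ : ℕ) (Ω : Finset (Fin N × Fin n)) : Prop :=
  (Ω.image Prod.fst).card ≤ s ∧ ∀ i : Fin N, (Ω.filter (fun p => p.1 = i)).card ≤ σ

/-!
Each occupied block of `Sig` holds at most `σ` indices, so after enlarging it to a `σ`-set its
energy is at most the optimal block energy `∑ j ∈ T i, ‖z (i, j)‖ ^ 2`. `Sig` occupies at most
`s` blocks, and exchanging its occupied blocks outside `S` for the unoccupied blocks of `S` can
only increase the total of these optimal energies, which over `S` is `‖z·P_{Ω*}‖²`.
-/

open Finset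

lemma sum_sq_norm_projVec {ι E : Type*} [Fintype ι] [DecidableEq ι] [SeminormedAddGroup E]
    (x : ι → E) (Ω : Finset ι) : ∑ i, ‖projVec x Ω i‖ ^ 2 = ∑ i ∈ Ω, ‖x i‖ ^ 2 := by
  simp [projVec, apply_ite (fun y : E => ‖y‖ ^ 2), sum_ite_mem]

lemma eNorm_projVec_le_of_sum_le {ι : Type*} [Fintype ι] [DecidableEq ι] (x : ι → ℂ)
    {Ω Ω' : Finset ι} (h : ∑ i ∈ Ω, ‖x i‖ ^ 2 ≤ ∑ i ∈ Ω', ‖x i‖ ^ 2) :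
    eNorm (projVec x Ω) ≤ eNorm (projVec x Ω') := by
  unfold eNorm
  rw [sum_sq_norm_projVec, sum_sq_norm_projVec]
  exact Real.sqrt_le_sqrt h

namespace Finset

variable {α : Type*} {f : α → ℝ}

lemma sum_le_sum_of_card_le_of_forall_le {A C : Finset α} (hcard : #A ≤ #C)
    (hC : ∀ c ∈ C, 0 ≤ f c) (h : ∀ a ∈ A, ∀ c ∈ C, f a ≤ f c) :
    ∑ a ∈ A, f a ≤ ∑ c ∈ C, f c := by
  rcases C.eq_empty_or_nonempty with rfl | hCne
  · simp_all
  obtain ⟨c₀, hc₀, hmin⟩ := exists_mem_eq_inf' hCne f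
  calc ∑ a ∈ A, f a ≤ #A • f c₀ :=
        sum_le_card_nsmul A f _ fun a ha => hmin ▸ le_inf' hCne f fun c hc => h a ha c hc
    _ ≤ #C • f c₀ := nsmul_le_nsmul_left (hC c₀ hc₀) hcard
    _ ≤ ∑ c ∈ C, f c := card_nsmul_le_sum C f _ fun c hc => hmin ▸ inf'_le f hc

lemma sum_le_sum_of_card_le_of_forall_notMem_le [DecidableEq α] {B S : Finset α}
    (hcard : #B ≤ #S) (hS : ∀ i ∈ S, 0 ≤ f i) (hdom : ∀ i ∈ S, ∀ i' ∉ S, f i' ≤ f i) :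
    ∑ i ∈ B, f i ≤ ∑ i ∈ S, f i := by
  rw [← sum_inter_add_sum_sdiff B S, ← sum_inter_add_sum_sdiff S B, inter_comm S B]
  refine add_le_add le_rfl <|
    sum_le_sum_of_card_le_of_forall_le (card_sdiff_le_card_sdiff_iff.2 hcard)
      (fun i hi => hS i (mem_sdiff.1 hi).1)
      fun i' hi' i hi => hdom i (mem_sdiff.1 hi).1 i' (mem_sdiff.1 hi').2

lemma sum_le_sum_of_card_le_of_forall_card_eq [Fintype α] {σ : ℕ} (hσ : σ ≤ Fintype.card α)
    {T J : Finset α} (hf : ∀ a, 0 ≤ f a)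
    (hT : ∀ T' : Finset α, #T' = σ → ∑ a ∈ T', f a ≤ ∑ a ∈ T, f a) (hJ : #J ≤ σ) :
    ∑ a ∈ J, f a ≤ ∑ a ∈ T, f a := by
  obtain ⟨T', hJT', hT'⟩ := exists_superset_card_eq hJ (by simpa using hσ)
  exact (sum_le_sum_of_subset_of_nonneg hJT' fun a _ _ => hf a).trans (hT T' hT')

lemma card_filter_mk_mem_le [DecidableEq α] {β : Type*} [Fintype β] [DecidableEq β]
    (Ω : Finset (α × β)) (i : α) : #{j | (i, j) ∈ Ω} ≤ #{p ∈ Ω | p.1 = i} :=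
  card_le_card_of_injOn (Prod.mk i) (fun j hj => by simpa using hj)
    (Prod.mk_right_injective i).injOn

lemma sum_eq_sum_sum_filter_mk_mem [DecidableEq α] {β M : Type*} [Fintype β] [DecidableEq β]
    [AddCommMonoid M] (Ω : Finset (α × β)) (g : α × β → M) :
    ∑ p ∈ Ω, g p = ∑ i ∈ Ω.image Prod.fst, ∑ j ∈ {j | (i, j) ∈ Ω}, g (i, j) :=
  sum_finset_product Ω _ _ fun p => by simpa using fun h => ⟨p.2, h⟩

end Finset

theorem hierarchical_thresholding_optimal_general {N n s σ : ℕ} (hσ : σ ≤ n)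
    (z : Fin N × Fin n → ℂ) (T : Fin N → Finset (Fin n)) (S : Finset (Fin N))
    (hTopt : ∀ i : Fin N, ∀ T' : Finset (Fin n), T'.card = σ →
      ∑ j ∈ T', ‖z (i, j)‖ ^ 2 ≤ ∑ j ∈ T i, ‖z (i, j)‖ ^ 2)
    (hScard : S.card = s)
    (hSopt : ∀ i ∈ S, ∀ i' ∉ S, ∑ j ∈ T i', ‖z (i', j)‖ ^ 2 ≤ ∑ j ∈ T i, ‖z (i, j)‖ ^ 2) :
    ∀ Sig : Finset (Fin N × Fin n), BlockSparseSupport s σ Sig →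
      eNorm (projVec z Sig) ≤ eNorm (projVec z (S.biUnion (fun i => {i} ×ˢ T i))) := by
  rintro Sig ⟨hblocks, hrows⟩
  apply eNorm_projVec_le_of_sum_le
  set rowMax : Fin N → ℝ := fun i => ∑ j ∈ T i, ‖z (i, j)‖ ^ 2
  calc ∑ p ∈ Sig, ‖z p‖ ^ 2
      = ∑ i ∈ Sig.image Prod.fst, ∑ j ∈ {j | (i, j) ∈ Sig}, ‖z (i, j)‖ ^ 2 :=
        sum_eq_sum_sum_filter_mk_mem Sig _
    _ ≤ ∑ i ∈ Sig.image Prod.fst, rowMax i := sum_le_sum fun i _ =>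
        sum_le_sum_of_card_le_of_forall_card_eq (by simpa using hσ) (fun _ => sq_nonneg _)
          (hTopt i) ((card_filter_mk_mem_le Sig i).trans (hrows i))
    _ ≤ ∑ i ∈ S, rowMax i :=
        sum_le_sum_of_card_le_of_forall_notMem_le (hScard ▸ hblocks)
          (fun i _ => sum_nonneg fun _ _ => sq_nonneg _) hSopt
    _ = ∑ p ∈ S.biUnion (fun i => {i} ×ˢ T i), ‖z p‖ ^ 2 :=
        (sum_finset_product _ S T (f := fun p => ‖z p‖ ^ 2) fun ⟨i, j⟩ => by simp).symm

theorem hierarchical_thresholding_optimal {N n s σ : ℕ} (hs : s ≤ N) (hσ : σ ≤ n)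
    (z : Fin N × Fin n → ℂ) (T : Fin N → Finset (Fin n)) (S : Finset (Fin N))
    (hTcard : ∀ i, (T i).card = σ)
    (hTopt : ∀ i : Fin N, ∀ T' : Finset (Fin n), T'.card = σ →
      ∑ j ∈ T', ‖z (i, j)‖ ^ 2 ≤ ∑ j ∈ T i, ‖z (i, j)‖ ^ 2)
    (hScard : S.card = s)
    (hSopt : ∀ i ∈ S, ∀ i' ∉ S, ∑ j ∈ T i', ‖z (i', j)‖ ^ 2 ≤ ∑ j ∈ T i, ‖z (i, j)‖ ^ 2) :
    ∀ Sig : Finset (Fin N × Fin n), BlockSparseSupport s σ Sig →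
      eNorm (projVec z Sig) ≤ eNorm (projVec z (S.biUnion (fun i => {i} ×ˢ T i))) :=
  hierarchical_thresholding_optimal_general hσ z T S hTopt hScard hSopt
end

section
/- Let z, x ∈ ℂ^d and Ω, Ω' ⊆ Fin d with supp(x) ⊆ Ω. If ‖z·P_{Ω'}‖ ≥ ‖z·P_Ω‖, then ‖x·P_{Ω∖Ω'}‖ ≤ √2 · ‖(z − x)·P_{ΩΔΩ'}‖, where ΩΔΩ' = (Ω∖Ω') ∪ (Ω'∖Ω) is the symmetric difference and ‖·‖ is the Euclidean norm. -/
/-!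
Write `A = Ω \ Ω'` and `B = Ω' \ Ω`. Removing the common part `Ω ∩ Ω'` from the hypothesis gives
`‖z·P_A‖ ≤ ‖z·P_B‖`, and `z = z - x` on `B` because `x` is supported in `Ω`. Hence, by the
triangle inequality, `‖x·P_A‖ ≤ ‖(z - x)·P_A‖ + ‖(z - x)·P_B‖`, and `a + b ≤ √2 · √(a² + b²)`
bounds this by `√2 · ‖(z - x)·P_{A ∪ B}‖`, since `A` and `B` are disjoint.
-/

open Finset

theorem add_le_sqrt_two_mul_sqrt_sq_add_sq (a b : ℝ) : a + b ≤ √2 * √(a ^ 2 + b ^ 2) := by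
  rw [← Real.sqrt_mul zero_le_two]
  apply Real.le_sqrt_of_sq_le
  nlinarith [sq_nonneg (a - b)]

section projVec

variable {𝕂 ι : Type*} [DecidableEq ι]

theorem projVec_sub [AddGroup 𝕂] (u v : ι → 𝕂) (S : Finset ι) :
    projVec (u - v) S = projVec u S - projVec v S := by
  ext i
  by_cases hi : i ∈ S <;> simp [projVec, hi]

theorem projVec_congr [Zero 𝕂] {u v : ι → 𝕂} {S : Finset ι} (h : ∀ i ∈ S, u i = v i) :
    projVec u S = projVec v S := by
  ext i
  by_cases hi : i ∈ S <;> simp [projVec, hi, h]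

end projVec

section eNorm

variable {ι : Type*} [Fintype ι]

theorem eNorm_eq_norm_toLp (u : ι → ℂ) : eNorm u = ‖WithLp.toLp 2 u‖ := by
  rw [EuclideanSpace.norm_eq]
  rfl

theorem eNorm_sub_le (u v : ι → ℂ) : eNorm (u - v) ≤ eNorm u + eNorm v := by
  simpa only [eNorm_eq_norm_toLp, WithLp.toLp_sub] using norm_sub_le _ _

variable [DecidableEq ι]

theorem eNorm_projVec (v : ι → ℂ) (S : Finset ι) :
    eNorm (projVec v S) = √(∑ i ∈ S, ‖v i‖ ^ 2) := by
  simp only [eNorm, projVec, apply_ite (‖·‖ ^ 2), norm_zero, zero_pow two_ne_zero, sum_ite_mem,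
    univ_inter]

theorem eNorm_projVec_union {v : ι → ℂ} {s t : Finset ι} (hst : Disjoint s t) :
    eNorm (projVec v (s ∪ t)) = √(eNorm (projVec v s) ^ 2 + eNorm (projVec v t) ^ 2) := by
  simp only [eNorm_projVec, sum_union hst]
  rw [Real.sq_sqrt (by positivity), Real.sq_sqrt (by positivity)]

theorem eNorm_projVec_sdiff_le_of_le {v : ι → ℂ} {s t : Finset ι}
    (h : eNorm (projVec v s) ≤ eNorm (projVec v t)) :
    eNorm (projVec v (s \ t)) ≤ eNorm (projVec v (t \ s)) := by
  rw [eNorm_projVec, eNorm_projVec] at h ⊢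
  exact Real.sqrt_le_sqrt (sum_sdiff_le_sum_sdiff.2 ((Real.sqrt_le_sqrt_iff (by positivity)).1 h))

end eNorm

theorem thresholding_consequence {d : ℕ} (z x : Fin d → ℂ) (Ω Ω' : Finset (Fin d))
    (hsupp : ∀ j, x j ≠ 0 → j ∈ Ω)
    (h : eNorm (projVec z Ω) ≤ eNorm (projVec z Ω')) :
    eNorm (projVec x (Ω \ Ω')) ≤
      Real.sqrt 2 * eNorm (projVec (z - x) ((Ω \ Ω') ∪ (Ω' \ Ω))) := by
  have hzB : projVec z (Ω' \ Ω) = projVec (z - x) (Ω' \ Ω) := projVec_congr fun i hi ↦ by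
    have : x i = 0 := not_imp_comm.1 (hsupp i) (mem_sdiff.1 hi).2
    simp [this]
  calc eNorm (projVec x (Ω \ Ω'))
      = eNorm (projVec z (Ω \ Ω') - projVec (z - x) (Ω \ Ω')) := by
        rw [← projVec_sub, sub_sub_cancel]
    _ ≤ eNorm (projVec z (Ω \ Ω')) + eNorm (projVec (z - x) (Ω \ Ω')) := eNorm_sub_le _ _
    _ ≤ eNorm (projVec (z - x) (Ω' \ Ω)) + eNorm (projVec (z - x) (Ω \ Ω')) := by
        grw [eNorm_projVec_sdiff_le_of_le h, hzB]
    _ ≤ √2 * eNorm (projVec (z - x) ((Ω \ Ω') ∪ (Ω' \ Ω))) := by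
        rw [eNorm_projVec_union disjoint_sdiff_sdiff, add_comm (eNorm _ ^ 2)]
        exact add_le_sqrt_two_mul_sqrt_sq_add_sq _ _
end
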